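/- Let γ be a closed walk on a graph that decomposes into 2m non-backtracking segments (i.e., the walk backtracks at most 2m times), visiting v vertices and e distinct edges. Then there exists a spanning tree T of the graph G(γ) traversed by γ whose degree sequence (d_u) satisfies Σ_{u: d_u > 2} (d_u − 2) ≤ e − (v − 1) + 2m. -/

import Mathlib

/-!
Take the first-visit tree of the walk: every vertex other than the start is joined to the vertex
from which the walk first reaches it. In a rooted tree, `∑_{d_u > 2} (d_u - 2)` is at most the
number of non-root leaves. Right after first reaching a leaf `u`, the walk either backtracks, or
crosses an edge from `u` to an earlier visited vertex that is not a tree edge. Charging `u` to that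
backtrack or that edge is injective, so there are at most `2m + (e - (v - 1))` leaves.
-/

open Finset SimpleGraph

theorem SimpleGraph.card_filter_notMem_edgeSet {V : Type*} {G : SimpleGraph V}
    {E : Finset (Sym2 V)} [DecidablePred (· ∈ G.edgeSet)] (hG : G.edgeSet ⊆ E) :
    #(E.filter (· ∉ G.edgeSet)) = #E - Nat.card G.edgeSet := by
  have hin : ↑(E.filter (· ∈ G.edgeSet)) = G.edgeSet := by
    ext e
    simpa using fun he => hG he
  have hcard : #(E.filter (· ∈ G.edgeSet)) = Nat.card G.edgeSet := by
    rw [← Set.ncard_coe_finset, hin, Nat.card_coe_set_eq]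
  rw [← card_filter_add_card_filter_not (s := E) (· ∈ G.edgeSet), hcard]
  omega

section ParentGraph

variable {V : Type*} (s : Finset V) (a : V) (f : V → V)

def parentGraph : SimpleGraph V := fromRel fun x y => x ∈ s ∧ x ≠ a ∧ f x = y

variable {s a f} {r : V → ℕ}

theorem parentGraph_adj (hr : ∀ x ∈ s, x ≠ a → r (f x) < r x) {x y : V} :
    (parentGraph s a f).Adj x y ↔
      (x ∈ s ∧ x ≠ a ∧ f x = y) ∨ (y ∈ s ∧ y ≠ a ∧ f y = x) := by
  refine ⟨fun h => h.2, fun h => ⟨?_, h⟩⟩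
  rintro rfl
  obtain ⟨hx, hxa, hfx⟩ | ⟨hx, hxa, hfx⟩ := h <;> exact (hfx ▸ hr x hx hxa).false

theorem parentGraph_isAcyclic (hr : ∀ x ∈ s, x ≠ a → r (f x) < r x) :
    (parentGraph s a f).IsAcyclic := by
  classical
  intro v c hc
  obtain ⟨u, hu, hmax⟩ := c.support.toFinset.exists_max_image r ⟨v, by simp⟩
  -- On a cycle through a vertex of maximal rank, both of its neighbours must be its parent.
  have hsub : c.toSubgraph.neighborSet u ⊆ {f u} := by
    intro w hw
    have hwr : r w ≤ r u := hmax w (by simpa using Walk.mem_support_of_adj_toSubgraph hw.symm)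
    obtain ⟨-, -, hfu⟩ | ⟨hw, hwa, hfw⟩ := (parentGraph_adj hr).1 (c.toSubgraph.adj_sub hw)
    · exact hfu.symm
    · exact absurd (hfw ▸ hr w hw hwa) hwr.not_gt
  have htwo := hc.ncard_neighborSet_toSubgraph_eq_two (List.mem_toFinset.1 hu)
  have := Set.ncard_le_ncard hsub
  rw [htwo, Set.ncard_singleton] at this
  omega

theorem parentGraph_reachable (hr : ∀ x ∈ s, x ≠ a → r (f x) < r x)
    (hf : ∀ x ∈ s, x ≠ a → f x ∈ s) (x : V) (hx : x ∈ s) :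
    (parentGraph s a f).Reachable x a := by
  by_cases hxa : x = a
  · exact hxa ▸ Reachable.refl x
  · have hadj : (parentGraph s a f).Adj x (f x) := (parentGraph_adj hr).2 (.inl ⟨hx, hxa, rfl⟩)
    exact hadj.reachable.trans (parentGraph_reachable hr hf (f x) (hf x hx hxa))
termination_by r x
decreasing_by exact hr x hx hxa

variable [DecidableEq V]

variable (s a f) in
def parentGraph.children (u : V) : Finset V := s.filter fun w => w ≠ a ∧ f w = u

variable (s a f) in
def parentGraph.leaves : Finset V := s.filter fun u => u ≠ a ∧ children s a f u = ∅

open parentGraph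

theorem card_edgeSet_parentGraph (hr : ∀ x ∈ s, x ≠ a → r (f x) < r x) (ha : a ∈ s) :
    Nat.card (parentGraph s a f).edgeSet = #s - 1 := by
  have hedges : (parentGraph s a f).edgeSet = ↑((s.erase a).image fun x => s(f x, x)) := by
    ext e
    induction e using Sym2.ind with
    | _ x y =>
      simp only [mem_edgeSet, parentGraph_adj hr, coe_image, coe_erase, Set.mem_image,
        Set.mem_sdiff, Set.mem_singleton_iff, mem_coe, Sym2.eq_iff]
      grind
  have hinj : Set.InjOn (fun x => s(f x, x)) ↑(s.erase a) := by
    intro x hx y hy hxy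
    simp only [coe_erase, Set.mem_sdiff, mem_coe, Set.mem_singleton_iff, Sym2.eq_iff] at hx hy hxy
    obtain ⟨-, hxy⟩ | ⟨hfx, hfy⟩ := hxy
    · exact hxy
    · have hx' := hr x hx.1 hx.2
      have hy' := hr y hy.1 hy.2
      rw [hfx] at hx'
      rw [← hfy] at hy'
      omega
  rw [hedges, Nat.card_coe_set_eq, Set.ncard_coe_finset, card_image_of_injOn hinj,
    card_erase_of_mem ha]

theorem card_neighborSet_parentGraph (hr : ∀ x ∈ s, x ≠ a → r (f x) < r x) (u : V) :
    Nat.card ((parentGraph s a f).neighborSet u) =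
      #(children s a f u) + if u ∈ s ∧ u ≠ a then 1 else 0 := by
  split_ifs with hu
  · have hpar : f u ∉ children s a f u := by
      simp only [children, mem_filter]
      rintro ⟨hfu, hfua, hffu⟩
      have hfu' := hr _ hfu hfua
      rw [hffu] at hfu'
      exact absurd hfu' (hr u hu.1 hu.2).not_gt
    have : (parentGraph s a f).neighborSet u = ↑(insert (f u) (children s a f u)) := by
      ext w
      simp only [mem_neighborSet, parentGraph_adj hr, coe_insert, children, coe_filter,
        Set.mem_insert_iff, Set.mem_ofPred_eq]
      grind
    rw [this, Nat.card_coe_set_eq, Set.ncard_coe_finset, card_insert_of_notMem hpar]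
  · have : (parentGraph s a f).neighborSet u = ↑(children s a f u) := by
      ext w
      simp only [mem_neighborSet, parentGraph_adj hr, children, coe_filter, Set.mem_ofPred_eq]
      grind
    rw [this, Nat.card_coe_set_eq, Set.ncard_coe_finset, add_zero]

theorem sum_card_children (hf : ∀ x ∈ s, x ≠ a → f x ∈ s) (ha : a ∈ s) :
    ∑ u ∈ s, #(children s a f u) = #s - 1 := by
  rw [← card_erase_of_mem ha, ← filter_ne',
    card_eq_sum_card_fiberwise fun x hx => hf x (mem_filter.1 hx).1 (mem_filter.1 hx).2]
  simp only [children, filter_filter]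

theorem sum_degree_sub_two_le_card_leaves (hr : ∀ x ∈ s, x ≠ a → r (f x) < r x)
    (hf : ∀ x ∈ s, x ≠ a → f x ∈ s) (ha : a ∈ s) :
    ∑ u ∈ s.filter (fun u => 2 < Nat.card ((parentGraph s a f).neighborSet u)),
      (Nat.card ((parentGraph s a f).neighborSet u) - 2) ≤ #(leaves s a f) := by
  have hdeg (u : V) :
      Nat.card ((parentGraph s a f).neighborSet u) - 2 ≤ #(children s a f u) - 1 := by
    rw [card_neighborSet_parentGraph hr]
    split_ifs <;> omega
  have hsplit : ∑ u ∈ s, (#(children s a f u) - 1) +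
      #(s.filter fun u => (children s a f u).Nonempty) = #s - 1 := by
    rw [← sum_card_children hf ha, card_filter, ← sum_add_distrib]
    refine sum_congr rfl fun u _ => ?_
    split_ifs with h
    · have := h.card_pos
      omega
    · simp [not_nonempty_iff_eq_empty.1 h]
  have hcover : #s ≤ #(s.filter fun u => (children s a f u).Nonempty) + #(leaves s a f) + 1 := by
    calc #s ≤ #(s.filter (fun u => (children s a f u).Nonempty) ∪ leaves s a f ∪ {a}) := by
          refine card_le_card fun u hu => ?_
          simp only [leaves, mem_union, mem_filter, mem_singleton, ← not_nonempty_iff_eq_empty]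
          tauto
      _ ≤ _ := (card_union_le _ _).trans (by grw [card_union_le, card_singleton])
  calc _ ≤ ∑ u ∈ s, (#(children s a f u) - 1) :=
        (sum_le_sum_of_subset (filter_subset _ _)).trans (sum_le_sum fun u _ => hdeg u)
    _ ≤ _ := by omega

end ParentGraph

section FirstVisitTree

variable {V : Type*} (γ : ℕ → V) (L : ℕ)

noncomputable def firstVisit (u : V) : ℕ := sInf {t | γ t = u}

noncomputable def firstVisitParent (u : V) : V := γ (firstVisit γ u - 1)

section

variable {γ}

theorem apply_firstVisit {u : V} {t : ℕ} (h : γ t = u) : γ (firstVisit γ u) = u :=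
  Nat.sInf_mem (s := {t | γ t = u}) ⟨t, h⟩

theorem firstVisit_le {u : V} {t : ℕ} (h : γ t = u) : firstVisit γ u ≤ t :=
  Nat.sInf_le h

theorem firstVisit_apply_zero : firstVisit γ (γ 0) = 0 :=
  Nat.le_zero.1 (firstVisit_le rfl)

end

variable [DecidableEq V]

def walkVertices : Finset V := (range (L + 1)).image γ

def walkEdges : Finset (Sym2 V) := (range L).image fun t => s(γ t, γ (t + 1))

def backtracks : Finset ℕ := (range (L - 1)).filter fun t => γ t = γ (t + 2)

noncomputable abbrev firstVisitTree : SimpleGraph V :=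
  parentGraph (walkVertices γ L) (γ 0) (firstVisitParent γ)

variable {γ L}

theorem mem_walkVertices {u : V} : u ∈ walkVertices γ L ↔ ∃ t ≤ L, γ t = u := by
  simp [walkVertices]

theorem apply_firstVisit_of_mem {u : V} (hu : u ∈ walkVertices γ L) : γ (firstVisit γ u) = u :=
  let ⟨_, _, ht⟩ := mem_walkVertices.1 hu
  apply_firstVisit ht

theorem firstVisit_le_of_mem {u : V} (hu : u ∈ walkVertices γ L) : firstVisit γ u ≤ L :=
  let ⟨_, htL, ht⟩ := mem_walkVertices.1 hu
  (firstVisit_le ht).trans htL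

theorem firstVisit_pos {u : V} (hu : u ∈ walkVertices γ L) (hu0 : u ≠ γ 0) :
    0 < firstVisit γ u :=
  Nat.pos_of_ne_zero fun h => hu0 (by rw [← apply_firstVisit_of_mem hu, h])

theorem firstVisit_injOn : Set.InjOn (firstVisit γ) ↑(walkVertices γ L) := fun _ hu _ hv h => by
  rw [← apply_firstVisit_of_mem hu, h, apply_firstVisit_of_mem hv]

theorem firstVisit_firstVisitParent_lt :
    ∀ u ∈ walkVertices γ L, u ≠ γ 0 →
      firstVisit γ (firstVisitParent γ u) < firstVisit γ u :=
  fun _ hu hu0 => (firstVisit_le rfl).trans_lt (Nat.sub_lt (firstVisit_pos hu hu0) one_pos)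

theorem firstVisitParent_mem {u : V} (hu : u ∈ walkVertices γ L) :
    firstVisitParent γ u ∈ walkVertices γ L :=
  mem_walkVertices.2 ⟨_, (Nat.sub_le _ 1).trans (firstVisit_le_of_mem hu), rfl⟩

theorem mem_walkEdges_of_adj_firstVisitTree {x y : V} (h : (firstVisitTree γ L).Adj x y) :
    s(x, y) ∈ walkEdges γ L := by
  have hpar {u : V} (hu : u ∈ walkVertices γ L) (hu0 : u ≠ γ 0) :
      s(firstVisitParent γ u, u) ∈ walkEdges γ L := by
    have hpos := firstVisit_pos hu hu0
    refine mem_image.2 ⟨firstVisit γ u - 1, mem_range.2 ?_, ?_⟩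
    · have := firstVisit_le_of_mem hu
      omega
    · rw [Nat.sub_add_cancel hpos, apply_firstVisit_of_mem hu, firstVisitParent]
  obtain ⟨hx, hx0, rfl⟩ | ⟨hy, hy0, rfl⟩ :=
    (parentGraph_adj firstVisit_firstVisitParent_lt).1 h
  · exact Sym2.eq_swap ▸ hpar hx hx0
  · exact hpar hy hy0

end FirstVisitTree

section Charging

open parentGraph

variable {V : Type*} [DecidableEq V] {γ : ℕ → V} {L : ℕ}

theorem firstVisit_lt_of_mem_leaves (hclosed : γ L = γ 0) {u : V}
    (hu : u ∈ leaves (walkVertices γ L) (γ 0) (firstVisitParent γ)) : firstVisit γ u < L := by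
  obtain ⟨huW, hu0, -⟩ := mem_filter.1 hu
  refine (firstVisit_le_of_mem huW).lt_of_ne fun h => hu0 ?_
  rw [← apply_firstVisit_of_mem huW, h, hclosed]

theorem firstVisit_next_le_of_mem_leaves (hclosed : γ L = γ 0) {u : V}
    (hu : u ∈ leaves (walkVertices γ L) (γ 0) (firstVisitParent γ)) :
    firstVisit γ (γ (firstVisit γ u + 1)) ≤ firstVisit γ u := by
  obtain ⟨huW, -, hleaf⟩ := mem_filter.1 hu
  have hlt := firstVisit_lt_of_mem_leaves hclosed hu
  by_contra! hgt
  set z := γ (firstVisit γ u + 1)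
  have hz : firstVisit γ z = firstVisit γ u + 1 := le_antisymm (firstVisit_le rfl) hgt
  have hchild : z ∈ children (walkVertices γ L) (γ 0) (firstVisitParent γ) u := by
    refine mem_filter.2 ⟨mem_walkVertices.2 ⟨_, hlt, rfl⟩, fun hz0 => ?_, ?_⟩
    · rw [hz0, firstVisit_apply_zero] at hz
      omega
    · rw [firstVisitParent, hz, Nat.add_sub_cancel, apply_firstVisit_of_mem huW]
  simp [hleaf] at hchild

theorem card_backtracking_leaves_le (hclosed : γ L = γ 0) :
    #((leaves (walkVertices γ L) (γ 0) (firstVisitParent γ)).filter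
      fun u => γ (firstVisit γ u - 1) = γ (firstVisit γ u + 1)) ≤ #(backtracks γ L) := by
  refine card_le_card_of_injOn (fun u => firstVisit γ u - 1) (fun u hu => ?_) fun u hu v hv h => ?_
  · obtain ⟨hleaf, hback⟩ := mem_filter.1 hu
    have hlt := firstVisit_lt_of_mem_leaves hclosed hleaf
    have hpos := firstVisit_pos (mem_filter.1 hleaf).1 (mem_filter.1 hleaf).2.1
    refine mem_filter.2 ⟨mem_range.2 (show firstVisit γ u - 1 < L - 1 by omega), ?_⟩
    rwa [show firstVisit γ u - 1 + 2 = firstVisit γ u + 1 by omega]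
  · obtain ⟨huW, hu0, -⟩ := mem_filter.1 (mem_filter.1 hu).1
    obtain ⟨hvW, hv0, -⟩ := mem_filter.1 (mem_filter.1 hv).1
    have := firstVisit_pos huW hu0
    have := firstVisit_pos hvW hv0
    exact firstVisit_injOn huW hvW (by simp only at h; omega)

theorem card_nonbacktracking_leaves_le (hclosed : γ L = γ 0)
    [DecidablePred (· ∈ (firstVisitTree γ L).edgeSet)] :
    #((leaves (walkVertices γ L) (γ 0) (firstVisitParent γ)).filter
      fun u => ¬γ (firstVisit γ u - 1) = γ (firstVisit γ u + 1)) ≤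
      #((walkEdges γ L).filter (· ∉ (firstVisitTree γ L).edgeSet)) := by
  refine card_le_card_of_injOn (fun u => s(u, γ (firstVisit γ u + 1))) (fun u hu => ?_)
    fun u hu v hv h => ?_
  · obtain ⟨hleaf, hback⟩ := mem_filter.1 hu
    obtain ⟨huW, -, hnochild⟩ := mem_filter.1 hleaf
    have hedge : s(u, γ (firstVisit γ u + 1)) ∈ walkEdges γ L :=
      mem_image.2 ⟨firstVisit γ u, mem_range.2 (firstVisit_lt_of_mem_leaves hclosed hleaf),
        by rw [apply_firstVisit_of_mem huW]⟩
    refine mem_filter.2 ⟨hedge, ?_⟩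
    rw [mem_edgeSet, parentGraph_adj firstVisit_firstVisitParent_lt]
    rintro (⟨-, -, hpar⟩ | ⟨hzW, hz0, hpar⟩)
    · exact hback hpar
    · have hchild : _ ∈ children _ _ _ u := mem_filter.2 ⟨hzW, hz0, hpar⟩
      simp [hnochild] at hchild
  · have huW := (mem_filter.1 (mem_filter.1 hu).1).1
    have hvW := (mem_filter.1 (mem_filter.1 hv).1).1
    have hu' := firstVisit_next_le_of_mem_leaves hclosed (mem_filter.1 hu).1
    have hv' := firstVisit_next_le_of_mem_leaves hclosed (mem_filter.1 hv).1
    obtain ⟨huv, -⟩ | ⟨huv, hvu⟩ := Sym2.eq_iff.1 h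
    · exact huv
    · rw [← huv] at hv'
      rw [hvu] at hu'
      exact firstVisit_injOn huW hvW (le_antisymm hv' hu')

theorem card_leaves_le (hclosed : γ L = γ 0)
    [DecidablePred (· ∈ (firstVisitTree γ L).edgeSet)] :
    #(leaves (walkVertices γ L) (γ 0) (firstVisitParent γ)) ≤
      #(backtracks γ L) + #((walkEdges γ L).filter (· ∉ (firstVisitTree γ L).edgeSet)) := by
  rw [← card_filter_add_card_filter_not
    fun u => γ (firstVisit γ u - 1) = γ (firstVisit γ u + 1)]
  exact add_le_add (card_backtracking_leaves_le hclosed) (card_nonbacktracking_leaves_le hclosed)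

end Charging

theorem spanning_tree_degree_overshoot_bound_general
    {V : Type*} [DecidableEq V]
    (L m : ℕ) (γ : ℕ → V)
    (hclosed : γ L = γ 0)
    (hback : ((Finset.range (L - 1)).filter fun s => γ s = γ (s + 2)).card ≤ 2 * m) :
    ∃ T : SimpleGraph V,
      T.IsAcyclic ∧
      (∀ x y, T.Adj x y → s(x, y) ∈ (Finset.range L).image fun s => s(γ s, γ (s + 1))) ∧
      (∀ x ∈ (Finset.range (L + 1)).image γ, ∀ y ∈ (Finset.range (L + 1)).image γ,
        T.Reachable x y) ∧
      Nat.card T.edgeSet = ((Finset.range (L + 1)).image γ).card - 1 ∧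
      ∑ u ∈ (((Finset.range (L + 1)).image γ).filter
          fun u => 2 < Nat.card {w | T.Adj u w}),
        (Nat.card {w | T.Adj u w} - 2) ≤
        ((Finset.range L).image fun s => s(γ s, γ (s + 1))).card -
            (((Finset.range (L + 1)).image γ).card - 1) + 2 * m := by
  classical
  have hr := firstVisit_firstVisitParent_lt (γ := γ) (L := L)
  have hf : ∀ u ∈ walkVertices γ L, u ≠ γ 0 →
      firstVisitParent γ u ∈ walkVertices γ L :=
    fun _ hu _ => firstVisitParent_mem hu
  have hroot : γ 0 ∈ walkVertices γ L := mem_walkVertices.2 ⟨0, L.zero_le, rfl⟩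
  have hreach := parentGraph_reachable hr hf
  refine ⟨firstVisitTree γ L, parentGraph_isAcyclic hr,
    fun x y => mem_walkEdges_of_adj_firstVisitTree,
    fun x hx y hy => (hreach x hx).trans (hreach y hy).symm,
    card_edgeSet_parentGraph hr hroot, ?_⟩
  have hnontree := card_filter_notMem_edgeSet (G := firstVisitTree γ L) (E := walkEdges γ L)
    fun e he => by
      induction e using Sym2.ind
      exact mem_walkEdges_of_adj_firstVisitTree he
  rw [card_edgeSet_parentGraph hr hroot] at hnontree
  show _ ≤ #(walkEdges γ L) - (#(walkVertices γ L) - 1) + 2 * m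
  calc _ ≤ #(parentGraph.leaves (walkVertices γ L) (γ 0) (firstVisitParent γ)) :=
        sum_degree_sub_two_le_card_leaves hr hf hroot
    _ ≤ #(backtracks γ L) + #((walkEdges γ L).filter (· ∉ (firstVisitTree γ L).edgeSet)) :=
        card_leaves_le hclosed
    _ ≤ _ := by
        have hback' : #(backtracks γ L) ≤ 2 * m := hback
        omega

/-- A closed walk with at most `2m` backtracks, visiting `v` vertices and `e` distinct
edges, admits a spanning tree of its graph whose degree sequence satisfies
`Σ_{u : d_u > 2} (d_u − 2) ≤ e − (v − 1) + 2m`. -/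
theorem spanning_tree_degree_overshoot_bound
    {V : Type*} [Fintype V] [DecidableEq V]
    (L m : ℕ) (hL : 1 ≤ L) (γ : ℕ → V)
    (hstep : ∀ s < L, γ s ≠ γ (s + 1))
    (hclosed : γ L = γ 0)
    (hback : ((Finset.range (L - 1)).filter fun s => γ s = γ (s + 2)).card ≤ 2 * m) :
    ∃ T : SimpleGraph V,
      T.IsAcyclic ∧
      (∀ x y, T.Adj x y → s(x, y) ∈ (Finset.range L).image fun s => s(γ s, γ (s + 1))) ∧
      (∀ x ∈ (Finset.range (L + 1)).image γ, ∀ y ∈ (Finset.range (L + 1)).image γ,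
        T.Reachable x y) ∧
      Nat.card T.edgeSet = ((Finset.range (L + 1)).image γ).card - 1 ∧
      ∑ u ∈ (((Finset.range (L + 1)).image γ).filter
          fun u => 2 < Nat.card {w | T.Adj u w}),
        (Nat.card {w | T.Adj u w} - 2) ≤
        ((Finset.range L).image fun s => s(γ s, γ (s + 1))).card -
            (((Finset.range (L + 1)).image γ).card - 1) + 2 * m :=
  spanning_tree_degree_overshoot_bound_general L m γ hclosed hback
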